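/- For the isochrone potential Ψ(r) = GM/(b + √(b² + r²)) with G, M, b > 0, the maximal squared angular momentum at relative energy ℰ ∈ (0, GM/(2b)] satisfies (with G = 1) L_m²(ℰ) = Mb(M/(2ℰb) + 2ℰb/M - 2). -/
import Mathlib


open Real

/-- For the isochrone potential `Ψ(r) = M/(b + √(b² + r²))` (with `G = 1`), the
maximal squared angular momentum at relative energy `ℰ ∈ (0, M/(2b)]` satisfies
`L_m²(ℰ) = Mb(M/(2ℰb) + 2ℰb/M - 2)`, where `L_m(ℰ) = rhat√(2(Ψ(rhat) - ℰ))` and `rhat`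
solves the circular-orbit condition `2ℰ = rhat Ψ'(rhat) + 2Ψ(rhat)`. -/
theorem isochrone_maximal_angular_momentum
    (M b : ℝ) (hM : 0 < M) (hb : 0 < b)
    (Ψ : ℝ → ℝ) (hΨ : ∀ r, Ψ r = M / (b + Real.sqrt (b ^ 2 + r ^ 2)))
    (ℰ : ℝ) (hℰ : 0 < ℰ) (hℰle : ℰ ≤ M / (2 * b))
    (rhat : ℝ) (hrhat : 0 < rhat)
    (hcirc : 2 * ℰ = rhat * deriv Ψ rhat + 2 * Ψ rhat) :
    (rhat * Real.sqrt (2 * (Ψ rhat - ℰ))) ^ 2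
      = M * b * (M / (2 * ℰ * b) + 2 * ℰ * b / M - 2) := by
  have hΨf : Ψ = fun r => M / (b + Real.sqrt (b ^ 2 + r ^ 2)) := funext hΨ
  set s := Real.sqrt (b ^ 2 + rhat ^ 2) with hs
  have hpos : (0:ℝ) < b ^ 2 + rhat ^ 2 := by positivity
  have hssq : s ^ 2 = b ^ 2 + rhat ^ 2 := Real.sq_sqrt hpos.le
  have hspos : 0 < s := Real.sqrt_pos.mpr hpos
  have hsb : b < s := by nlinarith
  have hupos : 0 < b + s := by linarith
  -- derivative computation
  have h1 : HasDerivAt (fun r : ℝ => b ^ 2 + r ^ 2) (2 * rhat) rhat := by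
    simpa using ((hasDerivAt_pow 2 rhat).const_add (b ^ 2))
  have h2 : HasDerivAt Real.sqrt (1 / (2 * s)) (b ^ 2 + rhat ^ 2) :=
    Real.hasDerivAt_sqrt hpos.ne'
  have h3 : HasDerivAt (fun r : ℝ => Real.sqrt (b ^ 2 + r ^ 2))
      (1 / (2 * s) * (2 * rhat)) rhat := h2.comp rhat h1
  have h4 : HasDerivAt (fun r : ℝ => b + Real.sqrt (b ^ 2 + r ^ 2))
      (1 / (2 * s) * (2 * rhat)) rhat := h3.const_add b
  have h5 : HasDerivAt Ψ
      ((0 * (b + s) - M * (1 / (2 * s) * (2 * rhat))) / (b + s) ^ 2) rhat := by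
    rw [hΨf]
    exact (hasDerivAt_const rhat M).div h4 hupos.ne'
  have hderiv : deriv Ψ rhat = -(M * (rhat / s)) / (b + s) ^ 2 := by
    rw [h5.deriv]
    field_simp
    ring
  have hΨr : Ψ rhat = M / (b + s) := hΨ rhat
  rw [hderiv, hΨr] at hcirc
  -- solve for ℰ : ℰ = M / (2 * s)
  have hE : ℰ = M / (2 * s) := by
    have h : 2 * ℰ * (s * (b + s) ^ 2)
        = (rhat * (-(M * (rhat / s)) / (b + s) ^ 2) + 2 * (M / (b + s))) * (s * (b + s) ^ 2) := by
      rw [← hcirc]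
    have h2 : (rhat * (-(M * (rhat / s)) / (b + s) ^ 2) + 2 * (M / (b + s))) * (s * (b + s) ^ 2)
        = -(M * rhat ^ 2) + 2 * M * s * (b + s) := by
      field_simp
    rw [h2] at h
    have hr2 : rhat ^ 2 = s ^ 2 - b ^ 2 := by linarith
    rw [hr2] at h
    have key : 2 * ℰ * s = M := by
      have hup2 : 0 < (b + s) ^ 2 := by positivity
      nlinarith [h]
    field_simp
    linarith
  have hEnz : ℰ ≠ 0 := hℰ.ne'
  have hnn : 0 ≤ 2 * (M / (b + s) - ℰ) := by
    rw [hE]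
    have : M / (b + s) - M / (2 * s) = M * (s - b) / ((b + s) * (2 * s)) := by
      field_simp; ring
    rw [this]
    have h1 : 0 < s - b := by linarith
    positivity
  rw [hΨr, mul_pow, Real.sq_sqrt hnn, hE]
  have hr2 : rhat ^ 2 = s ^ 2 - b ^ 2 := by linarith
  rw [hr2]
  field_simp
  ring
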